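/- arXiv:1901.06220 — 6 statements merged into one kernel-verified Lean document; each statement's English description precedes it below -/
import Mathlib

section
/- Let n, k ∈ ℕ with n ≥ 2k ≥ 2, and let 𝒮 = {{i, i+1, …, i+k−1} (mod n) : i ∈ [n]} be the sliding window domain, consisting of the n cyclic intervals of length k in [n]. Consider the test that picks a uniformly random pair (S, S') of windows in 𝒮 with S ∩ S' ≠ ∅ (i.e., a uniformly random edge of the graph on 𝒮 whose edges are the intersecting pairs, including self loops). Let F be an input function on 𝒮, and suppose the test accepts F with probability at least 1 − ε. Then there exists a majority decoding a ∈ {0,1}^n of F such that F(S) = a|_S for at least a (1 − 4ε) fraction of the windows S ∈ 𝒮. -/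
open Finset

/-- `a` is a majority decoding of `F` on the domain `V`: for every coordinate `i`,
`F(S)_i = a_i` for at least half of the sets `S ∈ V` containing `i`. -/
def IsMajorityDecoding {ι : Type*} [DecidableEq ι] (V : Finset (Finset ι))
    (F : Finset ι → ι → Bool) (a : ι → Bool) : Prop :=
  ∀ i : ι, (V.filter (fun S => i ∈ S)).card ≤
    2 * (V.filter (fun S => i ∈ S ∧ F S i = a i)).card

/-- The cyclic window `{s, s+1, …, s+k-1}` (arithmetic modulo `n`). -/
def slidingWindow (n k : ℕ) (s : ZMod n) : Finset (ZMod n) :=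
  (Finset.range k).image (fun (j : ℕ) => s + (j : ZMod n))

/-- The sliding window domain: the `n` cyclic intervals of length `k` in `[n]`. -/
def slidingDomain (n k : ℕ) : Finset (Finset (ZMod n)) :=
  (Finset.range n).image (fun (i : ℕ) => slidingWindow n k (i : ZMod n))

/-! ### Auxiliary lemmas -/

lemma natCast_zmod_inj {n : ℕ} (hn : 0 < n) {a b : ℕ} (ha : a < n) (hb : b < n)
    (h : (a : ZMod n) = b) : a = b := by
  haveI : NeZero n := ⟨hn.ne'⟩
  have := congrArg ZMod.val h
  rwa [ZMod.val_cast_of_lt ha, ZMod.val_cast_of_lt hb] at this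

lemma mem_slidingWindow {n k : ℕ} {s x : ZMod n} :
    x ∈ slidingWindow n k s ↔ ∃ j < k, s + (j : ZMod n) = x := by
  simp [slidingWindow]

lemma self_mem_slidingWindow {n k : ℕ} (hk : 1 ≤ k) (s : ZMod n) :
    s ∈ slidingWindow n k s :=
  mem_slidingWindow.mpr ⟨0, hk, by simp⟩

lemma slidingWindow_inj {n k : ℕ} (hk : 1 ≤ k) (hn : 2 * k ≤ n) :
    Function.Injective (slidingWindow n k) := by
  intro s t h
  have hn0 : 0 < n := by omega
  have hs : s ∈ slidingWindow n k t := h ▸ self_mem_slidingWindow hk s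
  have ht : t ∈ slidingWindow n k s := h.symm ▸ self_mem_slidingWindow hk t
  obtain ⟨j, hj, hjs⟩ := mem_slidingWindow.mp hs
  obtain ⟨j', hj', hjt⟩ := mem_slidingWindow.mp ht
  -- hjs : t + j = s,  hjt : s + j' = t
  have hz : s + ((j' + j : ℕ) : ZMod n) = s + ((0 : ℕ) : ZMod n) := by
    push_cast
    rw [← add_assoc, hjt, hjs]
    simp
  have hz' : ((j' + j : ℕ) : ZMod n) = ((0 : ℕ) : ZMod n) := add_left_cancel hz
  have : j' + j = 0 := natCast_zmod_inj hn0 (by omega) hn0 hz'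
  have hj0 : j = 0 := by omega
  rw [← hjs, hj0]
  simp

lemma slidingDomain_eq {n k : ℕ} [NeZero n] :
    slidingDomain n k = univ.image (slidingWindow n k) := by
  ext S
  simp only [slidingDomain, mem_image, mem_range, mem_univ, true_and]
  constructor
  · rintro ⟨i, -, rfl⟩; exact ⟨i, rfl⟩
  · rintro ⟨s, rfl⟩
    exact ⟨s.val, ZMod.val_lt s, by rw [ZMod.natCast_rightInverse s]⟩

lemma card_slidingDomain {n k : ℕ} (hk : 1 ≤ k) (hn : 2 * k ≤ n) :
    (slidingDomain n k).card = n := by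
  have hn0 : 0 < n := by omega
  haveI : NeZero n := ⟨hn0.ne'⟩
  rw [slidingDomain_eq, card_image_of_injective _ (slidingWindow_inj hk hn),
    card_univ, ZMod.card]

lemma count_windows {n k : ℕ} (hk : 1 ≤ k) (hn : 2 * k ≤ n) (i : ZMod n) :
    ((slidingDomain n k).filter (fun S => i ∈ S)).card = k := by
  have hn0 : 0 < n := by omega
  haveI : NeZero n := ⟨hn0.ne'⟩
  rw [slidingDomain_eq, filter_image,
    card_image_of_injective _ (slidingWindow_inj hk hn)]
  have heq : (univ.filter fun s : ZMod n => i ∈ slidingWindow n k s)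
      = (range k).image (fun j : ℕ => i - (j : ZMod n)) := by
    ext s
    simp only [mem_filter, mem_univ, true_and, mem_image, mem_range, mem_slidingWindow]
    constructor
    · rintro ⟨j, hj, hji⟩
      exact ⟨j, hj, by rw [← hji]; ring⟩
    · rintro ⟨j, hj, rfl⟩
      exact ⟨j, hj, by ring⟩
  rw [heq, card_image_of_injOn, card_range]
  intro j1 h1 j2 h2 h
  simp only [coe_range, Set.mem_Iio] at h1 h2
  have hc : (j1 : ZMod n) = (j2 : ZMod n) := sub_right_injective h
  exact natCast_zmod_inj hn0 (by omega) (by omega) hc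

/-- The pointwise majority decoding of `F`. -/
def majDecode {ι : Type*} [DecidableEq ι] (V : Finset (Finset ι))
    (F : Finset ι → ι → Bool) : ι → Bool := fun i =>
  decide ((V.filter fun S => i ∈ S ∧ F S i = false).card ≤
    (V.filter fun S => i ∈ S ∧ F S i = true).card)

lemma isMajority_majDecode {ι : Type*} [DecidableEq ι] (V : Finset (Finset ι))
    (F : Finset ι → ι → Bool) : IsMajorityDecoding V F (majDecode V F) := by
  intro i
  have hsplit : ((V.filter fun S => i ∈ S).filter fun S => F S i = true).card +
      ((V.filter fun S => i ∈ S).filter fun S => ¬ F S i = true).card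
      = (V.filter fun S => i ∈ S).card :=
    card_filter_add_card_filter_not _
  rw [filter_filter] at hsplit
  have hneg : ((V.filter fun S => i ∈ S).filter fun S => ¬ F S i = true)
      = V.filter fun S => i ∈ S ∧ F S i = false := by
    rw [filter_filter]
    apply filter_congr
    intro S _
    simp [Bool.not_eq_true]
  rw [hneg] at hsplit
  by_cases h : (V.filter fun S => i ∈ S ∧ F S i = false).card ≤
      (V.filter fun S => i ∈ S ∧ F S i = true).card
  · have hm : majDecode V F i = true := decide_eq_true h
    simp only [hm]
    omega
  · have hm : majDecode V F i = false := decide_eq_false h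
    simp only [hm]
    omega

/-- Let `n ≥ 2k` and let `𝒮` be the sliding window domain of the `n`
cyclic intervals of length `k` in `[n]`.  If an input function `F` passes, with probability
at least `1 − ε`, the test which picks a uniformly random pair of intersecting windows and
checks agreement on the intersection, then there is a majority decoding `a ∈ {0,1}^n` of `F`
with `F(S) = a|_S` for at least a `(1 − 4ε)` fraction of the windows `S ∈ 𝒮`. -/
theorem directProduct_slidingWindow (n k : ℕ) (hk : 1 ≤ k) (hn : 2 * k ≤ n)
    (F : Finset (ZMod n) → ZMod n → Bool) (ε : ℝ)
    (hpass :
      (1 - ε) *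
          (((slidingDomain n k ×ˢ slidingDomain n k).filter
            (fun p => (p.1 ∩ p.2).Nonempty)).card : ℝ) ≤
        (((slidingDomain n k ×ˢ slidingDomain n k).filter
            (fun p => (p.1 ∩ p.2).Nonempty ∧ ∀ i ∈ p.1 ∩ p.2, F p.1 i = F p.2 i)).card : ℝ)) :
    ∃ a : ZMod n → Bool, IsMajorityDecoding (slidingDomain n k) F a ∧
      (1 - 4 * ε) * ((slidingDomain n k).card : ℝ) ≤
        (((slidingDomain n k).filter (fun S => ∀ i ∈ S, F S i = a i)).card : ℝ) := by
  have hn0 : 0 < n := by omega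
  set D := slidingDomain n k with hD
  have hmemD : ∀ S : Finset (ZMod n), S ∈ D ↔ ∃ s : ZMod n, slidingWindow n k s = S := by
    haveI : NeZero n := ⟨hn0.ne'⟩
    intro S
    rw [hD]
    have : slidingDomain n k = univ.image (slidingWindow n k) := slidingDomain_eq
    rw [this, mem_image]
    exact ⟨fun ⟨s, _, h⟩ => ⟨s, h⟩, fun ⟨s, h⟩ => ⟨s, mem_univ s, h⟩⟩
  have cardD : D.card = n := card_slidingDomain hk hn
  set a := majDecode D F with ha
  have hmaj : IsMajorityDecoding D F a := isMajority_majDecode D F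
  refine ⟨a, hmaj, ?_⟩
  have hcount : ∀ i : ZMod n, (D.filter fun S => i ∈ S).card = k :=
    fun i => count_windows hk hn i
  -- pair sets
  set Pst := (D ×ˢ D).filter (fun p => (p.1 ∩ p.2).Nonempty) with hPst
  set Ast := (D ×ˢ D).filter
    (fun p => (p.1 ∩ p.2).Nonempty ∧ ∀ i ∈ p.1 ∩ p.2, F p.1 i = F p.2 i) with hAst
  set Rst := (D ×ˢ D).filter
    (fun p => (p.1 ∩ p.2).Nonempty ∧ ¬ ∀ i ∈ p.1 ∩ p.2, F p.1 i = F p.2 i) with hRst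
  have hsplitP : Ast.card + Rst.card = Pst.card := by
    have h := card_filter_add_card_filter_not
      (s := Pst) (p := fun p : Finset (ZMod n) × Finset (ZMod n) =>
        ∀ i ∈ p.1 ∩ p.2, F p.1 i = F p.2 i)
    rwa [hPst, filter_filter, filter_filter, ← hAst, ← hRst] at h
  -- upper bound on the number of intersecting pairs
  have hPle : Pst.card ≤ n * (2 * k) := by
    haveI : NeZero n := ⟨hn0.ne'⟩
    have hsub : Pst ⊆ (univ ×ˢ range (2 * k - 1)).image
        (fun q : ZMod n × ℕ =>
          (slidingWindow n k q.1,
           slidingWindow n k (q.1 + (q.2 : ZMod n) - ((k - 1 : ℕ) : ZMod n)))) := by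
      intro p hp
      rw [hPst, mem_filter, mem_product] at hp
      obtain ⟨⟨hp1, hp2⟩, x, hx⟩ := hp
      obtain ⟨s, hs⟩ := (hmemD p.1).mp hp1
      obtain ⟨t, ht⟩ := (hmemD p.2).mp hp2
      rw [mem_inter, ← hs, ← ht, mem_slidingWindow, mem_slidingWindow] at hx
      obtain ⟨⟨j, hj, hjx⟩, j', hj', hjx'⟩ := hx
      refine mem_image.mpr ⟨(s, j + (k - 1) - j'), ?_, ?_⟩
      · rw [mem_product, mem_range]
        exact ⟨mem_univ _, by omega⟩
      · have hcast : ((j + (k - 1) - j' : ℕ) : ZMod n)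
            = (j : ZMod n) + ((k - 1 : ℕ) : ZMod n) - (j' : ZMod n) := by
          have h1 : j + (k - 1) - j' = j + ((k - 1) - j') := by omega
          rw [h1, Nat.cast_add, Nat.cast_sub (by omega)]
          ring
        have hteq : s + ((j + (k - 1) - j' : ℕ) : ZMod n) - ((k - 1 : ℕ) : ZMod n) = t := by
          rw [hcast]
          have : s + (j : ZMod n) = t + (j' : ZMod n) := by rw [hjx, hjx']
          have h2 : t = s + (j : ZMod n) - (j' : ZMod n) := by
            rw [this]; ring
          rw [h2]; ring
        have : p = (slidingWindow n k s, slidingWindow n k t) := by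
          rw [hs, ht]
        rw [this, hteq]
    calc Pst.card ≤ _ := card_le_card hsub
      _ ≤ (univ ×ˢ range (2 * k - 1)).card := card_image_le
      _ = n * (2 * k - 1) := by rw [card_product, card_univ, ZMod.card, card_range]
      _ ≤ n * (2 * k) := Nat.mul_le_mul_left _ (by omega)
  -- the set of intersecting pairs is nonempty
  have hW0 : slidingWindow n k 0 ∈ D := (hmemD _).mpr ⟨0, rfl⟩
  have hPpos : 0 < Pst.card := by
    refine card_pos.mpr ⟨(slidingWindow n k 0, slidingWindow n k 0), ?_⟩
    rw [hPst, mem_filter, mem_product]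
    exact ⟨⟨hW0, hW0⟩, 0, mem_inter.mpr
      ⟨self_mem_slidingWindow hk 0, self_mem_slidingWindow hk 0⟩⟩
  have hAleP : Ast.card ≤ Pst.card := by omega
  have hPpos' : (1 : ℝ) ≤ (Pst.card : ℝ) := by exact_mod_cast hPpos
  have hAleP' : (Ast.card : ℝ) ≤ (Pst.card : ℝ) := by exact_mod_cast hAleP
  have hpass' : (1 - ε) * (Pst.card : ℝ) ≤ (Ast.card : ℝ) := hpass
  have hε : 0 ≤ ε := by
    by_contra hc
    push_neg at hc
    nlinarith [hpass']
  have hR : (Rst.card : ℝ) ≤ ε * (Pst.card : ℝ) := by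
    have h1 : (Ast.card : ℝ) + (Rst.card : ℝ) = (Pst.card : ℝ) := by
      exact_mod_cast hsplitP
    nlinarith [hpass']
  -- bad windows
  set B := D.filter (fun S => ¬ ∀ i ∈ S, F S i = a i) with hB
  have key : ∀ S ∈ B, ∃ i, i ∈ S ∧ F S i ≠ a i := by
    intro S hS
    rw [hB, mem_filter] at hS
    push_neg at hS
    obtain ⟨i, hi, hne⟩ := hS.2
    exact ⟨i, hi, hne⟩
  set g : Finset (ZMod n) → ZMod n := fun S =>
    if h : ∃ i ∈ S, F S i ≠ a i then h.choose else 0 with hg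
  have hg1 : ∀ S ∈ B, g S ∈ S ∧ F S (g S) ≠ a (g S) := by
    intro S hS
    have h := key S hS
    simp only [hg, dif_pos h]
    exact h.choose_spec
  set T : Finset (ZMod n) → Finset (Finset (ZMod n) × Finset (ZMod n)) := fun S =>
    (D.filter fun S' => g S ∈ S' ∧ F S' (g S) = a (g S)).image (fun S' => (S, S')) with hT
  have hinj : ∀ S : Finset (ZMod n),
      Function.Injective (fun S' : Finset (ZMod n) => (S, S')) := by
    intro S x y h
    simpa using congrArg Prod.snd h
  have hTcard : ∀ S ∈ B, k ≤ 2 * (T S).card := by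
    intro S hS
    rw [hT]
    simp only
    rw [card_image_of_injective _ (hinj S)]
    have h := hmaj (g S)
    rwa [hcount (g S)] at h
  have hsub : B.biUnion T ⊆ Rst := by
    intro p hp
    rw [mem_biUnion] at hp
    obtain ⟨S, hSB, hpT⟩ := hp
    simp only [hT, mem_image, mem_filter] at hpT
    obtain ⟨S', ⟨hS'D, hiS', hFa⟩, rfl⟩ := hpT
    obtain ⟨hgS, hgne⟩ := hg1 S hSB
    have hSD : S ∈ D := by
      rw [hB, mem_filter] at hSB; exact hSB.1
    rw [hRst, mem_filter, mem_product]
    refine ⟨⟨hSD, hS'D⟩, ⟨g S, mem_inter.mpr ⟨hgS, hiS'⟩⟩, ?_⟩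
    intro hall
    exact hgne (by rw [hall (g S) (mem_inter.mpr ⟨hgS, hiS'⟩), hFa])
  have hdisj : ∀ x ∈ B, ∀ y ∈ B, x ≠ y → Disjoint (T x) (T y) := by
    intro x _ y _ hxy
    rw [disjoint_left]
    intro p hpx hpy
    simp only [hT, mem_image] at hpx hpy
    obtain ⟨_, _, h1⟩ := hpx
    obtain ⟨_, _, h2⟩ := hpy
    exact hxy (by rw [← h1] at h2; exact (congrArg Prod.fst h2).symm)
  have hcardB : k * B.card ≤ 2 * Rst.card := by
    calc k * B.card = ∑ _S ∈ B, k := by rw [sum_const, smul_eq_mul, mul_comm]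
      _ ≤ ∑ S ∈ B, 2 * (T S).card := sum_le_sum hTcard
      _ = 2 * ∑ S ∈ B, (T S).card := by rw [mul_sum]
      _ = 2 * (B.biUnion T).card := by rw [card_biUnion hdisj]
      _ ≤ 2 * Rst.card := Nat.mul_le_mul_left _ (card_le_card hsub)
  -- good windows
  have hGB : (D.filter (fun S => ∀ i ∈ S, F S i = a i)).card + B.card = n := by
    have h := card_filter_add_card_filter_not (s := D)
      (p := fun S => ∀ i ∈ S, F S i = a i)
    rw [cardD] at h
    rw [hB]
    exact h
  -- real arithmetic
  have hk' : (1 : ℝ) ≤ (k : ℝ) := by exact_mod_cast hk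
  have h1 : (k : ℝ) * (B.card : ℝ) ≤ 2 * (Rst.card : ℝ) := by exact_mod_cast hcardB
  have h2 : (Pst.card : ℝ) ≤ (n : ℝ) * (2 * (k : ℝ)) := by exact_mod_cast hPle
  have h3 : ε * (Pst.card : ℝ) ≤ ε * ((n : ℝ) * (2 * (k : ℝ))) :=
    mul_le_mul_of_nonneg_left h2 hε
  have hkB : (k : ℝ) * (B.card : ℝ) ≤ 4 * ε * (n : ℝ) * (k : ℝ) := by nlinarith
  have hBle : (B.card : ℝ) ≤ 4 * ε * (n : ℝ) := by
    by_contra hc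
    push_neg at hc
    have := mul_lt_mul_of_pos_left hc (show (0 : ℝ) < (k : ℝ) by linarith)
    nlinarith
  have hGB' : ((D.filter (fun S => ∀ i ∈ S, F S i = a i)).card : ℝ) + (B.card : ℝ)
      = (n : ℝ) := by exact_mod_cast hGB
  rw [cardD]
  linarith
end

section
/- Let G = (V, E) be a d-regular graph with adjacency matrix A, and let λ ≥ 0 be such that ‖Ax‖ ≤ λ‖x‖ for every vector x orthogonal to the all-ones vector. Let S, T ⊆ V with S nonempty and |S| ≤ |V|/2. If u is chosen uniformly at random from S and v is a uniformly random neighbor of u, then Pr[v ∈ T] ≤ |T|/|V| + (λ/d)·√(|T|/|S|). -/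
open Finset

/-! With `n = |ι|` and `y = 1_T - (|T|/n) 1` the indicator of `T` with its mean removed,
regularity writes the number of edges from `S` to `T` as
`e(S, T) = d |S| |T| / n + ∑_{u ∈ S} (A y)(u)`. Since `y ⊥ 1`, the spectral hypothesis gives
`‖A y‖ ≤ λ ‖y‖ ≤ λ √|T|`, and Cauchy–Schwarz on `S` bounds the error term by `λ √(|S| |T|)`.
Dividing by `d |S|` gives the sampling bound. -/

section

variable {ι : Type*} [Fintype ι]

theorem Finset.sum_le_sqrt_card_mul_sqrt_sum_sq (S : Finset ι) (f : ι → ℝ) :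
    ∑ u ∈ S, f u ≤ √(#S) * √(∑ u, f u ^ 2) := by
  calc ∑ u ∈ S, f u ≤ √((∑ u ∈ S, f u) ^ 2) := Real.le_sqrt_of_sq_le le_rfl
    _ ≤ √(#S * ∑ u, f u ^ 2) := by
        gcongr
        refine sq_sum_le_card_mul_sum_sq.trans (mul_le_mul_of_nonneg_left ?_ (Nat.cast_nonneg _))
        exact sum_le_univ_sum_of_nonneg fun u => sq_nonneg (f u)
    _ = √(#S) * √(∑ u, f u ^ 2) := Real.sqrt_mul (Nat.cast_nonneg _) _

variable [DecidableEq ι]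

noncomputable def centeredIndicator (T : Finset ι) (v : ι) : ℝ :=
  (if v ∈ T then 1 else 0) - #T / Fintype.card ι

theorem sum_centeredIndicator (T : Finset ι) : ∑ v, centeredIndicator T v = 0 := by
  rcases isEmpty_or_nonempty ι with hι | hι
  · simp
  · have : (Fintype.card ι : ℝ) ≠ 0 := by positivity
    simp [centeredIndicator, sum_sub_distrib, mul_div_cancel₀ _ this]

theorem sum_centeredIndicator_sq_le (T : Finset ι) :
    ∑ v, centeredIndicator T v ^ 2 ≤ #T := by
  rcases isEmpty_or_nonempty ι with hι | hι
  · simp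
  set n : ℝ := (Fintype.card ι : ℝ)
  set t : ℝ := #T / n
  have hexpand : ∀ v, centeredIndicator T v ^ 2 = (1 - 2 * t) * (if v ∈ T then 1 else 0) + t ^ 2 :=
    fun v => by unfold centeredIndicator; split_ifs <;> ring
  have hn : n ≠ 0 := by positivity
  have hsum : ∑ v, centeredIndicator T v ^ 2 = #T - t * #T := by
    simp only [hexpand, sum_add_distrib, ← mul_sum]
    simp only [sum_boole, sum_const, card_univ, nsmul_eq_mul, filter_mem_eq_inter, univ_inter]
    simp only [t]; field_simp; ring
  rw [hsum]
  have : 0 ≤ t * #T := by positivity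
  linarith

theorem sum_mul_centeredIndicator (w : ι → ℝ) (T : Finset ι) :
    ∑ v, w v * centeredIndicator T v = ∑ v ∈ T, w v - #T / Fintype.card ι * ∑ v, w v := by
  simp [centeredIndicator, mul_sub, sum_sub_distrib, ← sum_mul, mul_comm]

theorem expander_mixing_lemma (A : ι → ι → ℝ) (d lam : ℝ) (hlam : 0 ≤ lam)
    (hreg : ∀ u, ∑ v, A u v = d)
    (hspec : ∀ x : ι → ℝ, ∑ v, x v = 0 →
      √(∑ u, (∑ v, A u v * x v) ^ 2) ≤ lam * √(∑ v, x v ^ 2))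
    (S T : Finset ι) :
    ∑ u ∈ S, ∑ v ∈ T, A u v ≤ d * #S * #T / Fintype.card ι + lam * √(#S * #T) := by
  set y := centeredIndicator T
  set Ay : ι → ℝ := fun u => ∑ v, A u v * y v
  have hrow : ∀ u, ∑ v ∈ T, A u v = Ay u + #T / Fintype.card ι * d := fun u => by
    simp only [Ay, y, sum_mul_centeredIndicator, hreg]; ring
  have hAy : √(∑ u, Ay u ^ 2) ≤ lam * √(#T) :=
    (hspec y (sum_centeredIndicator T)).trans
      (mul_le_mul_of_nonneg_left (Real.sqrt_le_sqrt (sum_centeredIndicator_sq_le T)) hlam)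
  calc ∑ u ∈ S, ∑ v ∈ T, A u v = ∑ u ∈ S, Ay u + #S * (#T / Fintype.card ι * d) := by
        simp only [hrow, sum_add_distrib, sum_const, nsmul_eq_mul]
    _ ≤ √(#S) * (lam * √(#T)) + #S * (#T / Fintype.card ι * d) := by
        gcongr
        exact (sum_le_sqrt_card_mul_sqrt_sum_sq S Ay).trans (by gcongr)
    _ = d * #S * #T / Fintype.card ι + lam * √(#S * #T) := by
        rw [Real.sqrt_mul (Nat.cast_nonneg _)]; ring

end

theorem expander_mixing_uniform_general {ι : Type*} [Fintype ι] [DecidableEq ι]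
    (A : ι → ι → ℕ) (d : ℕ) (hd : 0 < d)
    (hreg : ∀ u, ∑ v, A u v = d)
    (lam : ℝ) (hlam : 0 ≤ lam)
    (hspec : ∀ x : ι → ℝ, (∑ v, x v) = 0 →
      Real.sqrt (∑ u, (∑ v, (A u v : ℝ) * x v) ^ 2) ≤ lam * Real.sqrt (∑ v, x v ^ 2))
    (S T : Finset ι) (hS : S.Nonempty) :
    (S.card : ℝ)⁻¹ * ∑ u ∈ S, (∑ v ∈ T, (A u v : ℝ)) / d ≤
      (T.card : ℝ) / (Fintype.card ι : ℝ) +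
        (lam / d) * Real.sqrt ((T.card : ℝ) / (S.card : ℝ)) := by
  have hS0 : (0 : ℝ) < #S := by exact_mod_cast hS.card_pos
  have hd0 : (0 : ℝ) < d := by exact_mod_cast hd
  have hmix := expander_mixing_lemma (fun u v => (A u v : ℝ)) d lam hlam
    (fun u => by exact_mod_cast hreg u) hspec S T
  have hsqrt : √(#S * #T) / #S = √(#T / #S) := by
    rw [Real.sqrt_mul hS0.le, Real.sqrt_div' _ hS0.le, mul_div_right_comm, Real.sqrt_div_self',
      one_div_mul_eq_div]
  calc (S.card : ℝ)⁻¹ * ∑ u ∈ S, (∑ v ∈ T, (A u v : ℝ)) / d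
      = (∑ u ∈ S, ∑ v ∈ T, (A u v : ℝ)) / (#S * d) := by
        rw [← sum_div]; field_simp
    _ ≤ (d * #S * #T / Fintype.card ι + lam * √(#S * #T)) / (#S * d) := by gcongr
    _ = _ := by rw [add_div, mul_div_assoc lam, ← hsqrt]; field_simp

/-- expander mixing bound.  Let `A` be the adjacency matrix (with natural
number multiplicities, self loops allowed) of a `d`-regular graph on a finite vertex set, and
let `λ ≥ 0` satisfy `‖Ax‖ ≤ λ‖x‖` for every `x` orthogonal to the all-ones vector.  For
`S, T ⊆ V` with `S` nonempty and `|S| ≤ |V|/2`: picking `u` uniformly in `S` and `v` a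
uniformly random neighbor of `u` (i.e. with probability `A u v / d`),
`Pr[v ∈ T] ≤ |T|/|V| + (λ/d)·√(|T|/|S|)`. -/
theorem expander_mixing_uniform {ι : Type*} [Fintype ι] [DecidableEq ι]
    (A : ι → ι → ℕ) (d : ℕ) (hd : 0 < d)
    (hsym : ∀ u v, A u v = A v u)
    (hreg : ∀ u, ∑ v, A u v = d)
    (lam : ℝ) (hlam : 0 ≤ lam)
    (hspec : ∀ x : ι → ℝ, (∑ v, x v) = 0 →
      Real.sqrt (∑ u, (∑ v, (A u v : ℝ) * x v) ^ 2) ≤ lam * Real.sqrt (∑ v, x v ^ 2))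
    (S T : Finset ι) (hS : S.Nonempty)
    (hhalf : (S.card : ℝ) ≤ (Fintype.card ι : ℝ) / 2) :
    (S.card : ℝ)⁻¹ * ∑ u ∈ S, (∑ v ∈ T, (A u v : ℝ)) / d ≤
      (T.card : ℝ) / (Fintype.card ι : ℝ) +
        (lam / d) * Real.sqrt ((T.card : ℝ) / (S.card : ℝ)) :=
  expander_mixing_uniform_general A d hd hreg lam hlam hspec S T hS
end

section
/- Let n be an even positive integer and let V be the collection of all subsets of [n] of size n/2. Consider the test that picks two sets S, S' ∈ V uniformly and independently at random and accepts an input function F iff F(S) and F(S') agree on every coordinate of S ∩ S'. If F passes this test with probability at least 1 − ε, then there exists a majority decoding a ∈ {0,1}^n of F such that F(S) = a|_S for at least a (1 − 4ε) fraction of the sets S ∈ V. -/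
open Finset

/-- Let `n` be even and positive and let `V` be the collection of all
`n/2`-element subsets of `[n]`.  If an input function `F` passes, with probability at least
`1 − ε`, the test which picks `S, S' ∈ V` uniformly and independently at random and checks
that `F(S)` and `F(S')` agree on every coordinate of `S ∩ S'`, then there is a majority
decoding `a ∈ {0,1}^n` of `F` with `F(S) = a|_S` for at least a `(1 − 4ε)` fraction of the
sets `S ∈ V`. -/
theorem directProduct_halfSlice (n : ℕ) (hn : 0 < n) (heven : Even n)
    (F : Finset (Fin n) → Fin n → Bool) (ε : ℝ)
    (hpass :
      (1 - ε) * (((Finset.powersetCard (n / 2) (Finset.univ : Finset (Fin n))).card : ℝ) *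
          ((Finset.powersetCard (n / 2) (Finset.univ : Finset (Fin n))).card : ℝ)) ≤
        ((((Finset.powersetCard (n / 2) (Finset.univ : Finset (Fin n))) ×ˢ
            (Finset.powersetCard (n / 2) (Finset.univ : Finset (Fin n)))).filter
          (fun p => ∀ i ∈ p.1 ∩ p.2, F p.1 i = F p.2 i)).card : ℝ)) :
    ∃ a : Fin n → Bool,
      IsMajorityDecoding (Finset.powersetCard (n / 2) (Finset.univ : Finset (Fin n))) F a ∧
      (1 - 4 * ε) * (((Finset.powersetCard (n / 2) (Finset.univ : Finset (Fin n))).card : ℝ)) ≤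
        (((Finset.powersetCard (n / 2) (Finset.univ : Finset (Fin n))).filter
          (fun S => ∀ i ∈ S, F S i = a i)).card : ℝ) := by
  classical
  obtain ⟨m, rfl⟩ := heven
  have hm : 0 < m := by omega
  set V := Finset.powersetCard ((m + m) / 2) (Finset.univ : Finset (Fin (m + m))) with hVdef
  have hmemV : ∀ S : Finset (Fin (m + m)), S ∈ V ↔ S.card = m := by
    intro S
    rw [hVdef, Finset.mem_powersetCard_univ]
    omega
  -- every coordinate lies in exactly half the sets of V
  have hhalf : ∀ i : Fin (m + m), 2 * (V.filter (fun S => i ∈ S)).card = V.card := by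
    intro i
    have key : (V.filter (fun S => i ∈ S)).card = (V.filter (fun S => ¬ i ∈ S)).card := by
      apply Finset.card_bij' (fun S _ => Sᶜ) (fun S _ => Sᶜ)
      · intro S _; simp
      · intro S _; simp
      · intro S hS
        simp only [Finset.mem_filter] at hS
        obtain ⟨hSV, hiS⟩ := hS
        rw [hmemV] at hSV
        simp only [Finset.mem_filter, Finset.mem_compl, not_not]
        refine ⟨?_, hiS⟩
        rw [hmemV, Finset.card_compl, hSV, Fintype.card_fin]
        omega
      · intro S hS
        simp only [Finset.mem_filter] at hS
        obtain ⟨hSV, hiS⟩ := hS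
        rw [hmemV] at hSV
        simp only [Finset.mem_filter, Finset.mem_compl]
        refine ⟨?_, by simpa using hiS⟩
        rw [hmemV, Finset.card_compl, hSV, Fintype.card_fin]
        omega
    have htot := Finset.card_filter_add_card_filter_not
      (s := V) (p := fun S => i ∈ S)
    omega
  -- splitting by the value of F S i
  have hsplit : ∀ i : Fin (m + m),
      (V.filter (fun S => i ∈ S ∧ F S i = true)).card
        + (V.filter (fun S => i ∈ S ∧ F S i = false)).card
        = (V.filter (fun S => i ∈ S)).card := by
    intro i
    rw [← Finset.filter_filter, ← Finset.filter_filter]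
    have h2 : (V.filter (fun S => i ∈ S)).filter (fun S => F S i = false)
        = (V.filter (fun S => i ∈ S)).filter (fun S => ¬ F S i = true) := by
      apply Finset.filter_congr
      intro S _
      simp
    rw [h2, Finset.card_filter_add_card_filter_not]
  -- the majority decoding
  set a : Fin (m + m) → Bool := fun i =>
    if (V.filter (fun S => i ∈ S)).card
        ≤ 2 * (V.filter (fun S => i ∈ S ∧ F S i = true)).card
    then true else false with hadef
  have amaj : ∀ i : Fin (m + m), (V.filter (fun S => i ∈ S)).card ≤
      2 * (V.filter (fun S => i ∈ S ∧ F S i = a i)).card := by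
    intro i
    by_cases h : (V.filter (fun S => i ∈ S)).card
        ≤ 2 * (V.filter (fun S => i ∈ S ∧ F S i = true)).card
    · have hat : a i = true := by simp [hadef, h]
      rw [hat]; exact h
    · have haf : a i = false := by simp [hadef, h]
      rw [haf]
      have := hsplit i
      omega
  refine ⟨a, fun i => amaj i, ?_⟩
  -- Bad sets and witnesses
  set Bad := V.filter (fun S => ¬ ∀ i ∈ S, F S i = a i) with hBad
  set w : Finset (Fin (m + m)) → Fin (m + m) := fun S =>
    if h : ∃ i, i ∈ S ∧ ¬ F S i = a i then h.choose else ⟨0, hn⟩ with hw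
  have hwspec : ∀ S ∈ Bad, w S ∈ S ∧ ¬ F S (w S) = a (w S) := by
    intro S hS
    simp only [hBad, Finset.mem_filter] at hS
    push_neg at hS
    obtain ⟨i, hi, hne⟩ := hS.2
    have hex : ∃ i, i ∈ S ∧ ¬ F S i = a i := ⟨i, hi, hne⟩
    rw [hw]
    simp only [dif_pos hex]
    exact hex.choose_spec
  -- the set of failing pairs
  set Fail := ((V ×ˢ V).filter
    (fun p => ¬ ∀ i ∈ p.1 ∩ p.2, F p.1 i = F p.2 i)) with hFail
  set T := Bad.biUnion (fun S =>
    {S} ×ˢ (V.filter (fun S' => w S ∈ S' ∧ F S' (w S) = a (w S)))) with hT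
  have hdisj : (Bad : Set (Finset (Fin (m + m)))).PairwiseDisjoint
      (fun S => {S} ×ˢ (V.filter (fun S' => w S ∈ S' ∧ F S' (w S) = a (w S)))) := by
    intro S1 _ S2 _ hne
    simp only [Finset.disjoint_left]
    intro p hp1 hp2
    simp only [Finset.mem_product, Finset.mem_singleton] at hp1 hp2
    exact hne (hp1.1.symm.trans hp2.1)
  have hTcard : Bad.card * V.card ≤ 4 * T.card := by
    rw [hT, Finset.card_biUnion hdisj]
    calc Bad.card * V.card = ∑ _S ∈ Bad, V.card := by
          rw [Finset.sum_const, smul_eq_mul]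
      _ ≤ ∑ S ∈ Bad, 4 * ({S} ×ˢ (V.filter
            (fun S' => w S ∈ S' ∧ F S' (w S) = a (w S)))).card := by
          apply Finset.sum_le_sum
          intro S hS
          rw [Finset.card_product, Finset.card_singleton, one_mul]
          have h1 := hhalf (w S)
          have h2 := amaj (w S)
          omega
      _ = 4 * ∑ S ∈ Bad, ({S} ×ˢ (V.filter
            (fun S' => w S ∈ S' ∧ F S' (w S) = a (w S)))).card := by
          rw [Finset.mul_sum]
  have hTsub : T ⊆ Fail := by
    intro p hp
    rw [hT] at hp
    simp only [Finset.mem_biUnion] at hp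
    obtain ⟨S, hSBad, hpmem⟩ := hp
    simp only [Finset.mem_product, Finset.mem_singleton, Finset.mem_filter] at hpmem
    obtain ⟨hp1, hp2V, hwmem, hweq⟩ := hpmem
    obtain ⟨hwS, hwne⟩ := hwspec S hSBad
    rw [hFail]
    simp only [Finset.mem_filter, Finset.mem_product]
    refine ⟨⟨by rw [hp1]; exact (Finset.mem_filter.mp hSBad).1, hp2V⟩, ?_⟩
    intro hall
    apply hwne
    have hmemint : w S ∈ p.1 ∩ p.2 := by
      rw [Finset.mem_inter, hp1]
      exact ⟨hwS, hwmem⟩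
    have := hall (w S) hmemint
    rw [hp1] at this
    rw [this, hweq]
  have hTF : T.card ≤ Fail.card := Finset.card_le_card hTsub
  -- failing + passing pairs
  have hfp : ((V ×ˢ V).filter
      (fun p => ∀ i ∈ p.1 ∩ p.2, F p.1 i = F p.2 i)).card + Fail.card = V.card * V.card := by
    rw [hFail, Finset.card_filter_add_card_filter_not, Finset.card_product]
  -- now real arithmetic
  have hN0 : 0 < V.card := by
    rw [Finset.card_pos, hVdef, Finset.powersetCard_nonempty, Finset.card_univ,
      Fintype.card_fin]
    omega
  have hNpos : (0 : ℝ) < (V.card : ℝ) := by exact_mod_cast hN0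
  have hFailR : (Fail.card : ℝ) ≤ ε * ((V.card : ℝ) * (V.card : ℝ)) := by
    have hcast : ((((V ×ˢ V).filter
        (fun p => ∀ i ∈ p.1 ∩ p.2, F p.1 i = F p.2 i)).card : ℝ)) + (Fail.card : ℝ)
        = (V.card : ℝ) * (V.card : ℝ) := by exact_mod_cast hfp
    nlinarith [hpass]
  have hBadR : (Bad.card : ℝ) * (V.card : ℝ) ≤ 4 * (ε * ((V.card : ℝ) * (V.card : ℝ))) := by
    have h1 : ((Bad.card * V.card : ℕ) : ℝ) ≤ ((4 * Fail.card : ℕ) : ℝ) := by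
      exact_mod_cast le_trans hTcard (by omega)
    push_cast at h1
    nlinarith
  have hBadle : (Bad.card : ℝ) ≤ 4 * ε * (V.card : ℝ) := by
    refine le_of_mul_le_mul_right ?_ hNpos
    nlinarith [hBadR]
  have hGood : ((V.filter (fun S => ∀ i ∈ S, F S i = a i)).card : ℝ) + (Bad.card : ℝ)
      = (V.card : ℝ) := by
    rw [hBad]
    exact_mod_cast Finset.card_filter_add_card_filter_not (s := V)
      (p := fun S => ∀ i ∈ S, F S i = a i)
  linarith
end

section
/- Let n ≥ 3 and let V be the collection of all 2-element subsets of [n]. Consider the test that picks S ∈ V uniformly at random and then picks S' uniformly at random among the 2-element subsets with |S ∩ S'| = 1, and accepts an input function F iff F(S) and F(S') agree on the coordinate in S ∩ S'. If F passes this test with probability at least 1 − ε, then there exists a majority decoding a ∈ {0,1}^n of F such that F(S) = a|_S for at least a (1 − 4ε) fraction of the sets S ∈ V. -/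
open Finset

lemma exists_majority {α : Type*} (W : Finset α) (f : α → Bool) :
    ∃ b : Bool, W.card ≤ 2 * (W.filter (fun x => f x = b)).card := by
  rcases le_or_gt W.card (2 * (W.filter (fun x => f x = true)).card) with h | h
  · exact ⟨true, h⟩
  · refine ⟨false, ?_⟩
    have h2 := Finset.card_filter_add_card_filter_not (s := W)
      (p := fun x => f x = true)
    have h3 : W.filter (fun x => ¬ f x = true) = W.filter (fun x => f x = false) := by
      simp [Bool.not_eq_true]
    rw [h3] at h2
    omega

lemma eq_pair_of_mem {α : Type*} [DecidableEq α] {S : Finset α} {i : α}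
    (h2 : S.card = 2) (hi : i ∈ S) : ∃ j, j ≠ i ∧ S = {i, j} := by
  rw [Finset.card_eq_two] at h2
  obtain ⟨x, y, hxy, rfl⟩ := h2
  rcases Finset.mem_insert.mp hi with rfl | hy
  · exact ⟨y, Ne.symm hxy, rfl⟩
  · simp only [Finset.mem_singleton] at hy
    subst hy
    exact ⟨x, hxy, Finset.pair_comm x i⟩

lemma inter_eq_singleton {α : Type*} [DecidableEq α] {S T : Finset α} {i : α}
    (hS : S.card = 2) (hT : T.card = 2) (hiS : i ∈ S) (hiT : i ∈ T) (hne : S ≠ T) :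
    S ∩ T = {i} := by
  obtain ⟨x, hx, rfl⟩ := eq_pair_of_mem hS hiS
  obtain ⟨y, hy, rfl⟩ := eq_pair_of_mem hT hiT
  have hxy : x ≠ y := by rintro rfl; exact hne rfl
  ext a
  simp only [Finset.mem_inter, Finset.mem_insert, Finset.mem_singleton]
  constructor
  · rintro ⟨(rfl | rfl), (h | h)⟩ <;> tauto
  · rintro rfl; tauto

lemma card_Vi (n : ℕ) (i : Fin n) :
    ((Finset.powersetCard 2 (Finset.univ : Finset (Fin n))).filter
      (fun S => i ∈ S)).card = n - 1 := by
  have himg : (Finset.powersetCard 2 (Finset.univ : Finset (Fin n))).filter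
      (fun S => i ∈ S) = (Finset.univ.erase i).image (fun j => ({i, j} : Finset (Fin n))) := by
    ext S
    simp only [Finset.mem_filter, Finset.mem_powersetCard, Finset.mem_image,
      Finset.mem_erase, Finset.mem_univ, and_true]
    constructor
    · rintro ⟨⟨-, h2⟩, hi⟩
      obtain ⟨j, hj, rfl⟩ := eq_pair_of_mem h2 hi
      exact ⟨j, hj, rfl⟩
    · rintro ⟨j, hj, rfl⟩
      refine ⟨⟨Finset.subset_univ _, ?_⟩, Finset.mem_insert_self _ _⟩
      rw [Finset.card_insert_of_notMem (by simpa using Ne.symm hj)]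
      simp
  rw [himg, Finset.card_image_of_injOn, Finset.card_erase_of_mem (Finset.mem_univ i)]
  · rw [Finset.card_univ, Fintype.card_fin]
  · intro x hx y hy hxy
    simp only [Finset.coe_erase, Set.mem_diff, Set.mem_singleton_iff, Finset.mem_coe,
      Finset.mem_univ, true_and] at hx hy
    simp only at hxy
    have hmem : x ∈ ({i, y} : Finset (Fin n)) := by rw [← hxy]; simp
    rcases Finset.mem_insert.mp hmem with rfl | h
    · exact absurd rfl hx
    · simpa using h

lemma nat_sq_sub (m : ℕ) : m * m - m = m * (m - 1) := by
  cases m with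
  | zero => simp
  | succ l => rw [Nat.succ_sub_one, Nat.mul_succ, Nat.add_sub_cancel]

set_option maxHeartbeats 2000000 in
/-- Let `n ≥ 3` and let `V` be the collection of all `2`-element subsets of
`[n]`.  Consider the test which picks a uniformly random edge of the Johnson graph
`J(n,2,1)` — i.e. a uniformly random `S ∈ V` and then a uniformly random `S'` with
`|S ∩ S'| = 1` (this graph being `2(n−2)`-regular) — and checks that `F(S)` and `F(S')`
agree on the coordinate in `S ∩ S'`.  If `F` passes with probability at least `1 − ε`, then
there is a majority decoding `a ∈ {0,1}^n` of `F` with `F(S) = a|_S` for at least a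
`(1 − 4ε)` fraction of the sets `S ∈ V`. -/
theorem directProduct_pairs (n : ℕ) (hn : 3 ≤ n)
    (F : Finset (Fin n) → Fin n → Bool) (ε : ℝ)
    (hpass :
      (1 - ε) * (((((Finset.powersetCard 2 (Finset.univ : Finset (Fin n))) ×ˢ
            (Finset.powersetCard 2 (Finset.univ : Finset (Fin n)))).filter
          (fun p => (p.1 ∩ p.2).card = 1)).card : ℝ)) ≤
        ((((Finset.powersetCard 2 (Finset.univ : Finset (Fin n))) ×ˢ
            (Finset.powersetCard 2 (Finset.univ : Finset (Fin n)))).filter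
          (fun p => (p.1 ∩ p.2).card = 1 ∧ ∀ i ∈ p.1 ∩ p.2, F p.1 i = F p.2 i)).card : ℝ)) :
    ∃ a : Fin n → Bool,
      IsMajorityDecoding (Finset.powersetCard 2 (Finset.univ : Finset (Fin n))) F a ∧
      (1 - 4 * ε) * (((Finset.powersetCard 2 (Finset.univ : Finset (Fin n))).card : ℝ)) ≤
        (((Finset.powersetCard 2 (Finset.univ : Finset (Fin n))).filter
          (fun S => ∀ i ∈ S, F S i = a i)).card : ℝ) := by
  classical
  set V := Finset.powersetCard 2 (Finset.univ : Finset (Fin n)) with hVdef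
  choose a ha using fun i : Fin n =>
    exists_majority (V.filter (fun S => i ∈ S)) (fun S => F S i)
  have hMaj : IsMajorityDecoding V F a := by
    intro i
    have h := ha i
    rwa [Finset.filter_filter] at h
  refine ⟨a, hMaj, ?_⟩
  have hcard2 : ∀ S ∈ V, S.card = 2 := fun S hS => (Finset.mem_powersetCard.mp hS).2
  have hVi : ∀ i : Fin n, (V.filter (fun S => i ∈ S)).card = n - 1 := fun i => card_Vi n i
  have hinter : ∀ (i : Fin n), ∀ S ∈ V, ∀ T ∈ V, i ∈ S → i ∈ T → S ≠ T → S ∩ T = {i} :=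
    fun i S hS T hT hiS hiT hne =>
      inter_eq_singleton (hcard2 S hS) (hcard2 T hT) hiS hiT hne
  -- notation for agree/disagree sets
  set A : Fin n → Finset (Finset (Fin n)) :=
    fun i => V.filter (fun S => i ∈ S ∧ F S i = a i) with hAdef
  set D : Fin n → Finset (Finset (Fin n)) :=
    fun i => V.filter (fun S => i ∈ S ∧ ¬ F S i = a i) with hDdef
  have hAD : ∀ i : Fin n, (A i).card + (D i).card = n - 1 := by
    intro i
    simp only [hAdef, hDdef]
    rw [← Finset.filter_filter, ← Finset.filter_filter, ← hVi i]
    exact Finset.card_filter_add_card_filter_not (p := fun S => F S i = a i)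
  have hA2 : ∀ i : Fin n, n - 1 ≤ 2 * (A i).card := by
    intro i
    have := hMaj i
    rw [hVi i] at this
    exact this
  -- the edge set
  have hEb : (V ×ˢ V).filter (fun p => (p.1 ∩ p.2).card = 1)
      = Finset.univ.biUnion (fun i : Fin n => (V.filter (fun S => i ∈ S)).offDiag) := by
    ext p
    simp only [Finset.mem_filter, Finset.mem_product, Finset.mem_biUnion, Finset.mem_univ,
      true_and, Finset.mem_offDiag]
    constructor
    · rintro ⟨⟨h1, h2⟩, hc⟩
      obtain ⟨i, hi⟩ := Finset.card_eq_one.mp hc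
      have hi1 : i ∈ p.1 := (Finset.mem_inter.mp (hi ▸ Finset.mem_singleton_self i)).1
      have hi2 : i ∈ p.2 := (Finset.mem_inter.mp (hi ▸ Finset.mem_singleton_self i)).2
      refine ⟨i, ⟨h1, hi1⟩, ⟨h2, hi2⟩, ?_⟩
      rintro heq
      rw [heq, Finset.inter_self] at hi
      have h2' := hcard2 p.2 h2
      rw [hi] at h2'
      simp at h2'
    · rintro ⟨i, ⟨h1, hi1⟩, ⟨h2, hi2⟩, hne⟩
      refine ⟨⟨h1, h2⟩, ?_⟩
      rw [hinter i p.1 h1 p.2 h2 hi1 hi2 hne]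
      simp
  have hdisj : ∀ i ∈ (Finset.univ : Finset (Fin n)), ∀ j ∈ (Finset.univ : Finset (Fin n)),
      i ≠ j → Disjoint ((V.filter (fun S => i ∈ S)).offDiag)
        ((V.filter (fun S => j ∈ S)).offDiag) := by
    intro i _ j _ hij
    rw [Finset.disjoint_left]
    rintro p hpi hpj
    rw [Finset.mem_offDiag] at hpi hpj
    obtain ⟨h1, h2, hne⟩ := hpi
    rw [Finset.mem_filter] at h1 h2
    have hint := hinter i p.1 h1.1 p.2 h2.1 h1.2 h2.2 hne
    have hj : j ∈ p.1 ∩ p.2 := Finset.mem_inter.mpr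
      ⟨(Finset.mem_filter.mp hpj.1).2, (Finset.mem_filter.mp hpj.2.1).2⟩
    rw [hint, Finset.mem_singleton] at hj
    exact hij hj.symm
  have hEcard : ((V ×ˢ V).filter (fun p => (p.1 ∩ p.2).card = 1)).card
      = n * ((n - 1) * (n - 2)) := by
    rw [hEb, Finset.card_biUnion hdisj]
    have hoff : ∀ i : Fin n, ((V.filter (fun S => i ∈ S)).offDiag).card
        = (n - 1) * (n - 2) := by
      intro i
      have h12 : n - 1 - 1 = n - 2 := by omega
      rw [Finset.offDiag_card, hVi i, nat_sq_sub, h12]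
    rw [Finset.sum_congr rfl (fun i _ => hoff i), Finset.sum_const, Finset.card_univ,
      Fintype.card_fin, smul_eq_mul]
  -- bad pairs
  have hbadmem : ∀ (i : Fin n) (p : Finset (Fin n) × Finset (Fin n)),
      p ∈ (D i) ×ˢ (A i) ∪ (A i) ×ˢ (D i) →
      p.1 ∈ V ∧ p.2 ∈ V ∧ i ∈ p.1 ∧ i ∈ p.2 ∧ ¬ F p.1 i = F p.2 i := by
    intro i p hp
    rcases Finset.mem_union.mp hp with h | h
    · rw [Finset.mem_product, hAdef, hDdef, Finset.mem_filter, Finset.mem_filter] at h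
      obtain ⟨⟨hv1, hi1, hf1⟩, hv2, hi2, hf2⟩ := h
      exact ⟨hv1, hv2, hi1, hi2, fun hcon => hf1 (by rw [hcon, hf2])⟩
    · rw [Finset.mem_product, hAdef, hDdef, Finset.mem_filter, Finset.mem_filter] at h
      obtain ⟨⟨hv1, hi1, hf1⟩, hv2, hi2, hf2⟩ := h
      exact ⟨hv1, hv2, hi1, hi2, fun hcon => hf2 (by rw [← hcon, hf1])⟩
  have hBadsub : (Finset.univ.biUnion (fun i : Fin n => (D i) ×ˢ (A i) ∪ (A i) ×ˢ (D i)))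
      ⊆ ((V ×ˢ V).filter (fun p => (p.1 ∩ p.2).card = 1)).filter
        (fun p => ¬ ∀ i ∈ p.1 ∩ p.2, F p.1 i = F p.2 i) := by
    intro p hp
    rw [Finset.mem_biUnion] at hp
    obtain ⟨i, -, hp⟩ := hp
    obtain ⟨hv1, hv2, hi1, hi2, hne⟩ := hbadmem i p hp
    have hne' : p.1 ≠ p.2 := fun h => hne (by rw [h])
    have hint := hinter i p.1 hv1 p.2 hv2 hi1 hi2 hne'
    rw [Finset.mem_filter, Finset.mem_filter, Finset.mem_product]
    refine ⟨⟨⟨hv1, hv2⟩, by rw [hint]; simp⟩, ?_⟩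
    intro hall
    exact hne (hall i (by rw [hint]; simp))
  have hBdisj : ∀ i ∈ (Finset.univ : Finset (Fin n)), ∀ j ∈ (Finset.univ : Finset (Fin n)),
      i ≠ j → Disjoint ((D i) ×ˢ (A i) ∪ (A i) ×ˢ (D i))
        ((D j) ×ˢ (A j) ∪ (A j) ×ˢ (D j)) := by
    intro i _ j _ hij
    rw [Finset.disjoint_left]
    intro p hpi hpj
    obtain ⟨hv1, hv2, hi1, hi2, hnei⟩ := hbadmem i p hpi
    obtain ⟨-, -, hj1, hj2, -⟩ := hbadmem j p hpj
    have hne' : p.1 ≠ p.2 := fun h => hnei (by rw [h])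
    have hint := hinter i p.1 hv1 p.2 hv2 hi1 hi2 hne'
    have hj : j ∈ p.1 ∩ p.2 := Finset.mem_inter.mpr ⟨hj1, hj2⟩
    rw [hint, Finset.mem_singleton] at hj
    exact hij hj.symm
  have hABdisj : ∀ i : Fin n, Disjoint ((D i) ×ˢ (A i)) ((A i) ×ˢ (D i)) := by
    intro i
    rw [Finset.disjoint_left]
    intro p hp1 hp2
    rw [Finset.mem_product] at hp1 hp2
    rw [hAdef, hDdef, Finset.mem_filter] at hp1 hp2
    exact hp1.1.2.2 hp2.1.2.2
  have hBadcard : ∀ i : Fin n,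
      ((D i) ×ˢ (A i) ∪ (A i) ×ˢ (D i)).card = 2 * ((D i).card * (A i).card) := by
    intro i
    rw [Finset.card_union_of_disjoint (hABdisj i), Finset.card_product, Finset.card_product]
    ring
  have hKey : (n - 1) * (∑ i : Fin n, (D i).card)
      ≤ (((V ×ˢ V).filter (fun p => (p.1 ∩ p.2).card = 1)).filter
        (fun p => ¬ ∀ i ∈ p.1 ∩ p.2, F p.1 i = F p.2 i)).card := by
    calc (n - 1) * (∑ i : Fin n, (D i).card) = ∑ i : Fin n, (n - 1) * (D i).card := by
          rw [Finset.mul_sum]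
      _ ≤ ∑ i : Fin n, ((D i) ×ˢ (A i) ∪ (A i) ×ˢ (D i)).card := by
          refine Finset.sum_le_sum fun i _ => ?_
          rw [hBadcard i]
          calc (n - 1) * (D i).card ≤ (2 * (A i).card) * (D i).card :=
                Nat.mul_le_mul_right _ (hA2 i)
            _ = 2 * ((D i).card * (A i).card) := by ring
      _ = (Finset.univ.biUnion (fun i : Fin n => (D i) ×ˢ (A i) ∪ (A i) ×ˢ (D i))).card :=
          (Finset.card_biUnion hBdisj).symm
      _ ≤ _ := Finset.card_le_card hBadsub
  -- good/bad split on edges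
  have hGB : (((V ×ˢ V).filter (fun p => (p.1 ∩ p.2).card = 1)).filter
        (fun p => ∀ i ∈ p.1 ∩ p.2, F p.1 i = F p.2 i)).card
      + (((V ×ˢ V).filter (fun p => (p.1 ∩ p.2).card = 1)).filter
        (fun p => ¬ ∀ i ∈ p.1 ∩ p.2, F p.1 i = F p.2 i)).card
      = ((V ×ˢ V).filter (fun p => (p.1 ∩ p.2).card = 1)).card :=
    Finset.card_filter_add_card_filter_not
      (fun p : Finset (Fin n) × Finset (Fin n) => ∀ i ∈ p.1 ∩ p.2, F p.1 i = F p.2 i)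
  rw [← Finset.filter_filter] at hpass
  -- good/bad split on vertices
  have hGS : (V.filter (fun S => ∀ i ∈ S, F S i = a i)).card
      + (V.filter (fun S => ¬ ∀ i ∈ S, F S i = a i)).card = V.card :=
    Finset.card_filter_add_card_filter_not
      (fun S : Finset (Fin n) => ∀ i ∈ S, F S i = a i)
  have hBadS : (V.filter (fun S => ¬ ∀ i ∈ S, F S i = a i)).card
      ≤ ∑ i : Fin n, (D i).card := by
    calc (V.filter (fun S => ¬ ∀ i ∈ S, F S i = a i)).card
        ≤ (Finset.univ.biUnion D).card := by
          refine Finset.card_le_card fun S hS => ?_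
          rw [Finset.mem_filter] at hS
          obtain ⟨hSV, hS2⟩ := hS
          push_neg at hS2
          obtain ⟨i, hiS, hne⟩ := hS2
          exact Finset.mem_biUnion.mpr ⟨i, Finset.mem_univ i,
            by rw [hDdef]; exact Finset.mem_filter.mpr ⟨hSV, hiS, hne⟩⟩
      _ ≤ ∑ i : Fin n, (D i).card := Finset.card_biUnion_le
  -- double counting : 2 |V| = n (n-1)
  have hVc : n * (n - 1) = 2 * V.card := by
    have h1 : ∑ i : Fin n, (V.filter (fun S => i ∈ S)).card = ∑ S ∈ V, S.card := by
      simp only [Finset.card_filter]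
      rw [Finset.sum_comm]
      refine Finset.sum_congr rfl fun S _ => ?_
      rw [Finset.sum_ite_mem, Finset.univ_inter, Finset.sum_const, smul_eq_mul, mul_one]
    rw [Finset.sum_congr rfl (fun i _ => hVi i), Finset.sum_const, Finset.card_univ,
      Fintype.card_fin, smul_eq_mul] at h1
    rw [Finset.sum_congr rfl (fun S hS => hcard2 S hS), Finset.sum_const, smul_eq_mul] at h1
    omega
  -- pass to the reals
  have hx : (3 : ℝ) ≤ (n : ℝ) := by exact_mod_cast hn
  have hc1 : ((n - 1 : ℕ) : ℝ) = (n : ℝ) - 1 := by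
    rw [Nat.cast_sub (by omega : 1 ≤ n)]; simp
  have hc2 : ((n - 2 : ℕ) : ℝ) = (n : ℝ) - 2 := by
    rw [Nat.cast_sub (by omega : 2 ≤ n)]; simp
  set e := ((V ×ˢ V).filter (fun p => (p.1 ∩ p.2).card = 1)).card with hedef
  set g := (((V ×ˢ V).filter (fun p => (p.1 ∩ p.2).card = 1)).filter
      (fun p => ∀ i ∈ p.1 ∩ p.2, F p.1 i = F p.2 i)).card with hgdef
  set b := (((V ×ˢ V).filter (fun p => (p.1 ∩ p.2).card = 1)).filter
      (fun p => ¬ ∀ i ∈ p.1 ∩ p.2, F p.1 i = F p.2 i)).card with hbdef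
  have heR : (e : ℝ) = (n : ℝ) * (((n : ℝ) - 1) * ((n : ℝ) - 2)) := by
    rw [hEcard]; push_cast [hc1, hc2]; ring
  have hgbR : (g : ℝ) + (b : ℝ) = (e : ℝ) := by exact_mod_cast hGB
  have hgle : (g : ℝ) ≤ (e : ℝ) := by
    have : g ≤ e := Finset.card_le_card (Finset.filter_subset _ _)
    exact_mod_cast this
  have hepos : (0 : ℝ) < (e : ℝ) := by
    rw [heR]
    exact mul_pos (by linarith) (mul_pos (by linarith) (by linarith))
  have hεpos : 0 ≤ ε := by nlinarith [hpass]
  have hbR : (b : ℝ) ≤ ε * (e : ℝ) := by nlinarith [hpass]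
  have hKeyR : ((n : ℝ) - 1) * ((∑ i : Fin n, (D i).card : ℕ) : ℝ) ≤ (b : ℝ) := by
    rw [← hc1]
    exact_mod_cast hKey
  have hBadSR : ((V.filter (fun S => ¬ ∀ i ∈ S, F S i = a i)).card : ℝ)
      ≤ ((∑ i : Fin n, (D i).card : ℕ) : ℝ) := by exact_mod_cast hBadS
  have hGSR : ((V.filter (fun S => ∀ i ∈ S, F S i = a i)).card : ℝ)
      + ((V.filter (fun S => ¬ ∀ i ∈ S, F S i = a i)).card : ℝ) = (V.card : ℝ) := by
    exact_mod_cast hGS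
  have hVcR : (n : ℝ) * ((n : ℝ) - 1) = 2 * (V.card : ℝ) := by
    rw [← hc1]
    exact_mod_cast hVc
  -- final arithmetic
  set s := ((∑ i : Fin n, (D i).card : ℕ) : ℝ) with hsdef
  set bs := ((V.filter (fun S => ¬ ∀ i ∈ S, F S i = a i)).card : ℝ) with hbsdef
  have hx1 : (0 : ℝ) < (n : ℝ) - 1 := by linarith
  have hstep : ((n : ℝ) - 1) * bs ≤ ((n : ℝ) - 1) * (2 * ε * (n : ℝ) * ((n : ℝ) - 1)) := by
    have h1 : ((n : ℝ) - 1) * bs ≤ ((n : ℝ) - 1) * s :=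
      mul_le_mul_of_nonneg_left hBadSR (le_of_lt hx1)
    have h2 : ((n : ℝ) - 1) * s ≤ ε * ((n : ℝ) * (((n : ℝ) - 1) * ((n : ℝ) - 2))) := by
      calc ((n : ℝ) - 1) * s ≤ (b : ℝ) := hKeyR
        _ ≤ ε * (e : ℝ) := hbR
        _ = ε * ((n : ℝ) * (((n : ℝ) - 1) * ((n : ℝ) - 2))) := by rw [heR]
    nlinarith [mul_nonneg (mul_nonneg hεpos (by linarith : (0:ℝ) ≤ (n:ℝ))) (mul_nonneg (by linarith : (0:ℝ) ≤ (n:ℝ)) (by linarith : (0:ℝ) ≤ (n:ℝ) - 1))]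
  have hbs4 : bs ≤ 2 * ε * (n : ℝ) * ((n : ℝ) - 1) :=
    le_of_mul_le_mul_left hstep hx1
  have h5 : 2 * ε * (n : ℝ) * ((n : ℝ) - 1) = 4 * ε * (V.card : ℝ) := by
    have := hVcR
    nlinarith [hVcR]
  linarith [hGSR, hbs4, h5]
end

section
/- Let k be an even positive integer and let n be a multiple of k/2 with n ≥ 2k. Let 𝒮̃ = {{i·k/2 + 1, …, i·k/2 + k} (mod n) : i ∈ [2n/k]} be the collection of 2n/k cyclic windows of length k starting at multiples of k/2. Consider the test that picks a uniformly random pair (S,S') of windows in 𝒮̃ with S ∩ S' ≠ ∅ (i.e., a uniformly random edge of the graph on 𝒮̃ whose edges are the intersecting pairs, including self loops), and accepts an input function F iff F(S) and F(S') agree on every coordinate of S ∩ S'. If F passes this test with probability at least 1 − ε, then there exists a majority decoding a ∈ {0,1}^n of F such that F(S) = a|_S for at least a (1 − 3ε) fraction of the windows S ∈ 𝒮̃. -/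
open Finset

/-- The sub-sampled sliding window domain `𝒮̃`: the `2n/k` cyclic windows of length `k`
whose starting positions are the multiples of `k/2`. -/
def subSlidingDomain (n k : ℕ) : Finset (Finset (ZMod n)) :=
  (Finset.range (2 * n / k)).image (fun (i : ℕ) => slidingWindow n k ((i * (k / 2) : ℕ) : ZMod n))


/-!
Cut `ZMod n`, `n = h t`, into the `t` blocks `{x : x.val / h = q}` of length `h = k/2`; the
`i`-th window of `𝒮̃` is the union of blocks `i` and `i + 1 (mod t)`. Decode each point `x` by the
window that starts at its block, `a x = F(W_{⌊x/h⌋}) x`. Every point lies in at most two windows,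
one of which agrees with `a` at `x`, so `a` is a majority decoding. If a window `S` disagrees with
`a` at `x`, then `S` and the window decoding `x` form a rejected pair, so there are at most
`ε · #pairs` bad windows, and `#pairs ≤ 3 · #𝒮̃` because every window meets at most three windows.
-/

section Agreement

variable {ι : Type*} [DecidableEq ι]

def intersectingPairs (V : Finset (Finset ι)) : Finset (Finset ι × Finset ι) :=
  (V ×ˢ V).filter (fun p => (p.1 ∩ p.2).Nonempty)

abbrev AgreeOnInter (F : Finset ι → ι → Bool) (p : Finset ι × Finset ι) : Prop :=
  ∀ i ∈ p.1 ∩ p.2, F p.1 i = F p.2 i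

variable {V : Finset (Finset ι)}

lemma card_le_card_intersectingPairs (hne : ∀ S ∈ V, S.Nonempty) :
    #V ≤ #(intersectingPairs V) :=
  card_le_card_of_injOn (fun S => (S, S))
    (fun S hS => mem_filter.mpr ⟨mem_product.mpr ⟨hS, hS⟩, by simpa using hne S hS⟩)
    (fun _ _ _ _ h => congrArg Prod.fst h)

lemma card_intersectingPairs_le {d : ℕ}
    (hdeg : ∀ S ∈ V, #(V.filter (fun S' => (S ∩ S').Nonempty)) ≤ d) :
    #(intersectingPairs V) ≤ d * #V := by
  refine card_le_mul_card_image_of_maps_to (f := Prod.fst)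
    (fun p hp => (mem_product.mp (mem_filter.mp hp).1).1) d fun S hS => ?_
  refine (card_le_card_of_injOn Prod.snd (fun p hp => ?_) fun p hp q hq h => ?_).trans (hdeg S hS)
  · simp only [coe_filter, Set.mem_ofPred_eq, mem_filter, mem_product] at hp
    obtain ⟨⟨⟨-, hp2⟩, hp⟩, rfl⟩ := hp
    exact mem_filter.mpr ⟨hp2, hp⟩
  · simp only [coe_filter, Set.mem_ofPred_eq] at hp hq
    exact Prod.ext (hp.2.trans hq.2.symm) h

variable (F : Finset ι → ι → Bool) {home : ι → Finset ι}

lemma isMajorityDecoding_of_home (hhome : ∀ x, home x ∈ V ∧ x ∈ home x)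
    (hcover : ∀ x, #(V.filter (fun S => x ∈ S)) ≤ 2) :
    IsMajorityDecoding V F (fun x => F (home x) x) := by
  intro x
  have : 1 ≤ #(V.filter (fun S => x ∈ S ∧ F S x = F (home x) x)) :=
    card_pos.mpr ⟨home x, mem_filter.mpr ⟨(hhome x).1, (hhome x).2, rfl⟩⟩
  linarith [hcover x]

lemma card_filter_not_agree_home_le (hhome : ∀ x, home x ∈ V ∧ x ∈ home x) :
    #(V.filter (fun S => ¬ ∀ x ∈ S, F S x = F (home x) x)) ≤
      #((intersectingPairs V).filter (fun p => ¬ AgreeOnInter F p)) := by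
  refine (card_le_card fun S hS => ?_).trans (card_image_le (f := Prod.fst))
  obtain ⟨hSV, hbad⟩ := mem_filter.mp hS
  obtain ⟨x, hxS, hx⟩ := not_forall₂.mp hbad
  refine mem_image.mpr ⟨(S, home x), ?_, rfl⟩
  refine mem_filter.mpr ⟨mem_filter.mpr ⟨mem_product.mpr ⟨hSV, (hhome x).1⟩, x, ?_⟩, ?_⟩
  · exact mem_inter.mpr ⟨hxS, (hhome x).2⟩
  · exact fun hagree => hx (hagree x (mem_inter.mpr ⟨hxS, (hhome x).2⟩))

theorem exists_isMajorityDecoding_of_agreement_test (ε : ℝ)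
    (hhome : ∀ x, home x ∈ V ∧ x ∈ home x) (hne : ∀ S ∈ V, S.Nonempty)
    (hcover : ∀ x, #(V.filter (fun S => x ∈ S)) ≤ 2)
    (hdeg : ∀ S ∈ V, #(V.filter (fun S' => (S ∩ S').Nonempty)) ≤ 3)
    (hpass : (1 - ε) * (#(intersectingPairs V) : ℝ) ≤
      #((intersectingPairs V).filter (AgreeOnInter F))) :
    ∃ a : ι → Bool, IsMajorityDecoding V F a ∧
      (1 - 3 * ε) * (#V : ℝ) ≤ #(V.filter (fun S => ∀ x ∈ S, F S x = a x)) := by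
  refine ⟨_, isMajorityDecoding_of_home F hhome hcover, ?_⟩
  have hpairs := card_filter_add_card_filter_not (s := intersectingPairs V)
    (p := AgreeOnInter F)
  have hwindows := card_filter_add_card_filter_not (s := V)
    (p := fun S => ∀ x ∈ S, F S x = F (home x) x)
  have hbad : (#(V.filter (fun S => ¬ ∀ x ∈ S, F S x = F (home x) x)) : ℝ) ≤
      #((intersectingPairs V).filter (fun p => ¬ AgreeOnInter F p)) := by
    exact_mod_cast card_filter_not_agree_home_le F hhome
  have hT : (#(intersectingPairs V) : ℝ) ≤ 3 * #V := by
    exact_mod_cast card_intersectingPairs_le hdeg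
  have hV : (#V : ℝ) ≤ #(intersectingPairs V) := by
    exact_mod_cast card_le_card_intersectingPairs hne
  rw [← Nat.cast_inj (R := ℝ)] at hpairs hwindows
  push_cast at hpairs hwindows
  rcases le_or_gt 0 ε with hε | hε
  · nlinarith [mul_le_mul_of_nonneg_left hT hε]
  · nlinarith [mul_le_mul_of_nonpos_left hV hε.le]

end Agreement

lemma nonempty_of_mem_subSlidingDomain {n k : ℕ} {S : Finset (ZMod n)}
    (hS : S ∈ subSlidingDomain n k) : S.Nonempty := by
  obtain ⟨i, hi, rfl⟩ := mem_image.mp hS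
  have hk : k ≠ 0 := by
    rintro rfl
    simp at hi
  simpa [slidingWindow] using hk

section Windows

variable {h t : ℕ}

def blockIndex (h t : ℕ) (x : ZMod (h * t)) : ZMod t := ((x.val / h : ℕ) : ZMod t)

def window (h t i : ℕ) : Finset (ZMod (h * t)) :=
  slidingWindow (h * t) (2 * h) ((i * h : ℕ) : ZMod (h * t))

lemma blockIndex_natCast (m : ℕ) : blockIndex h t m = ((m / h : ℕ) : ZMod t) := by
  rw [blockIndex, ZMod.val_natCast, Nat.mod_mul_right_div_self, ZMod.natCast_mod]

lemma blockIndex_of_mem_window {i : ℕ} {x : ZMod (h * t)} (hx : x ∈ window h t i) :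
    blockIndex h t x = i ∨ blockIndex h t x = i + 1 := by
  obtain ⟨j, hj, rfl⟩ := mem_image.mp hx
  rw [mem_range] at hj
  have hh : 0 < h := by omega
  have hjh : j / h < 2 := (Nat.div_lt_iff_lt_mul hh).mpr (by linarith)
  rw [← Nat.cast_add, blockIndex_natCast, add_comm, Nat.add_mul_div_right _ _ hh]
  interval_cases j / h
  · left; simp
  · right; simp [add_comm]

lemma mem_window_val_div [NeZero (h * t)] (x : ZMod (h * t)) : x ∈ window h t (x.val / h) := by
  have hh : 0 < h := Nat.pos_of_ne_zero (left_ne_zero_of_mul (NeZero.ne (h * t)))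
  refine mem_image.mpr ⟨x.val % h, mem_range.mpr (by linarith [Nat.mod_lt x.val hh]), ?_⟩
  rw [← Nat.cast_add, Nat.div_add_mod', ZMod.natCast_zmod_val]

lemma subSlidingDomain_eq_image (hh : 0 < h) :
    subSlidingDomain (h * t) (2 * h) = (range t).image (window h t) := by
  have ht : 2 * (h * t) / (2 * h) = t := by
    rw [← mul_assoc, Nat.mul_div_cancel_left _ (by omega)]
  rw [subSlidingDomain, ht, Nat.mul_div_cancel_left _ two_pos]
  rfl

lemma window_val_div_mem_subSlidingDomain [NeZero (h * t)] (x : ZMod (h * t)) :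
    window h t (x.val / h) ∈ subSlidingDomain (h * t) (2 * h) := by
  have hh : 0 < h := Nat.pos_of_ne_zero (left_ne_zero_of_mul (NeZero.ne (h * t)))
  rw [subSlidingDomain_eq_image hh]
  refine mem_image_of_mem _ (mem_range.mpr ((Nat.div_lt_iff_lt_mul hh).mpr ?_))
  simpa [mul_comm] using ZMod.val_lt x

lemma card_filter_image_window_le {p : Finset (ZMod (h * t)) → Prop} [DecidablePred p]
    (T : Finset (ZMod t)) (hT : ∀ i < t, p (window h t i) → (i : ZMod t) ∈ T) :
    #(((range t).image (window h t)).filter p) ≤ #T := by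
  rw [filter_image]
  refine card_image_le.trans (card_le_card_of_injOn (fun i => (i : ZMod t)) ?_ ?_)
  · intro i hi
    obtain ⟨hit, hpi⟩ := mem_filter.mp hi
    exact hT i (mem_range.mp hit) hpi
  · intro i hi j hj hij
    simp only [coe_filter, mem_range, Set.mem_ofPred_eq] at hi hj
    simpa [Nat.mod_eq_of_lt hi.1, Nat.mod_eq_of_lt hj.1] using
      (ZMod.natCast_eq_natCast_iff' i j t).mp hij

lemma card_windows_containing_le (hh : 0 < h) (x : ZMod (h * t)) :
    #((subSlidingDomain (h * t) (2 * h)).filter (fun S => x ∈ S)) ≤ 2 := by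
  rw [subSlidingDomain_eq_image hh]
  refine (card_filter_image_window_le {blockIndex h t x, blockIndex h t x - 1}
    fun i _ hx => ?_).trans card_le_two
  rcases blockIndex_of_mem_window hx with hi | hi <;> simp [hi]

lemma card_windows_meeting_le (hh : 0 < h) {S : Finset (ZMod (h * t))}
    (hS : S ∈ subSlidingDomain (h * t) (2 * h)) :
    #((subSlidingDomain (h * t) (2 * h)).filter (fun S' => (S ∩ S').Nonempty)) ≤ 3 := by
  rw [subSlidingDomain_eq_image hh] at hS ⊢
  obtain ⟨i, -, rfl⟩ := mem_image.mp hS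
  refine (card_filter_image_window_le {(i : ZMod t) - 1, (i : ZMod t), (i : ZMod t) + 1}
    fun j _ ⟨x, hx⟩ => ?_).trans card_le_three
  obtain ⟨hxi, hxj⟩ := mem_inter.mp hx
  rcases blockIndex_of_mem_window hxi with hi | hi <;>
    rcases blockIndex_of_mem_window hxj with hj | hj <;>
    simp only [mem_insert, mem_singleton] <;> grind

end Windows

theorem directProduct_subSlidingWindow_general (n k : ℕ) (hkeven : Even k)
    (hdvd : k / 2 ∣ n)
    (F : Finset (ZMod n) → ZMod n → Bool) (ε : ℝ)
    (hpass :
      (1 - ε) *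
          (((subSlidingDomain n k ×ˢ subSlidingDomain n k).filter
            (fun p => (p.1 ∩ p.2).Nonempty)).card : ℝ) ≤
        (((subSlidingDomain n k ×ˢ subSlidingDomain n k).filter
            (fun p => (p.1 ∩ p.2).Nonempty ∧ ∀ i ∈ p.1 ∩ p.2, F p.1 i = F p.2 i)).card : ℝ)) :
    ∃ a : ZMod n → Bool, IsMajorityDecoding (subSlidingDomain n k) F a ∧
      (1 - 3 * ε) * ((subSlidingDomain n k).card : ℝ) ≤
        (((subSlidingDomain n k).filter (fun S => ∀ i ∈ S, F S i = a i)).card : ℝ) := by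
  obtain ⟨h, rfl⟩ := hkeven.two_dvd
  obtain ⟨t, rfl⟩ : h ∣ n := by simpa using hdvd
  obtain rfl | hh := Nat.eq_zero_or_pos h
  · simp [subSlidingDomain, IsMajorityDecoding]
  obtain rfl | ht := Nat.eq_zero_or_pos t
  · simp [subSlidingDomain, IsMajorityDecoding]
  have : NeZero (h * t) := ⟨(Nat.mul_pos hh ht).ne'⟩
  exact exists_isMajorityDecoding_of_agreement_test F ε
    (home := fun x => window h t (x.val / h))
    (fun x => ⟨window_val_div_mem_subSlidingDomain x, mem_window_val_div x⟩)
    (fun _ => nonempty_of_mem_subSlidingDomain) (card_windows_containing_le hh)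
    (fun _ => card_windows_meeting_le hh) (by rwa [intersectingPairs, filter_filter])

/-- Let `k` be even and positive, and let `n` be a multiple of `k/2` with
`n ≥ 2k`.  If an input function `F` passes, with probability at least `1 − ε`, the test which
picks a uniformly random pair of intersecting windows of `𝒮̃` (self loops included) and checks
agreement on the intersection, then there is a majority decoding `a ∈ {0,1}^n` of `F` with
`F(S) = a|_S` for at least a `(1 − 3ε)` fraction of the windows `S ∈ 𝒮̃`. -/
theorem directProduct_subSlidingWindow (n k : ℕ) (hk : 0 < k) (hkeven : Even k)
    (hdvd : k / 2 ∣ n) (hn : 2 * k ≤ n)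
    (F : Finset (ZMod n) → ZMod n → Bool) (ε : ℝ)
    (hpass :
      (1 - ε) *
          (((subSlidingDomain n k ×ˢ subSlidingDomain n k).filter
            (fun p => (p.1 ∩ p.2).Nonempty)).card : ℝ) ≤
        (((subSlidingDomain n k ×ˢ subSlidingDomain n k).filter
            (fun p => (p.1 ∩ p.2).Nonempty ∧ ∀ i ∈ p.1 ∩ p.2, F p.1 i = F p.2 i)).card : ℝ)) :
    ∃ a : ZMod n → Bool, IsMajorityDecoding (subSlidingDomain n k) F a ∧
      (1 - 3 * ε) * ((subSlidingDomain n k).card : ℝ) ≤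
        (((subSlidingDomain n k).filter (fun S => ∀ i ∈ S, F S i = a i)).card : ℝ) :=
  directProduct_subSlidingWindow_general n k hkeven hdvd F ε hpass
end

section
/- Let G be a d-regular graph on vertex set [n] with vertex isoperimetric constant at least γ > 0, i.e., for every nonempty set R ⊆ [n] with |R| ≤ n/d, the boundary ∂(R) = {u ∉ R : u has a neighbor in R} satisfies |∂(R)| ≥ γ·d·|R|. Let x, y ∈ {0,1}^n be distinct strings whose relative Hamming distance δ = Δ(x,y) satisfies δ ≤ 1/d. Then the fraction of vertices v ∈ [n] for which the restrictions of x and y to the neighborhood N(v) = ∂({v}) of v differ is at least γ·δ·d. -/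
open Finset

/-- Let `G` be a simple `d`-regular graph on `[n]` with vertex
isoperimetric constant at least `γ > 0`: every nonempty `R ⊆ [n]` with `|R| ≤ n/d` has
boundary `∂(R) = {u ∉ R : u has a neighbor in R}` of size at least `γ·d·|R|`.  If
`x, y ∈ {0,1}^n` are distinct with relative Hamming distance `δ ≤ 1/d`, then the fraction of
vertices `v` on whose neighborhood `N(v)` the restrictions of `x` and `y` differ is at least
`γ·δ·d`; i.e. the direct product encodings on the domain of vertex neighborhoods satisfy
`Δ(DP(x), DP(y)) ≥ γ·δ·d`. -/
theorem neighborhood_domain_distance_amplification (n d : ℕ)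
    (G : SimpleGraph (Fin n)) [DecidableRel G.Adj]
    (hreg : G.IsRegularOfDegree d)
    (γ : ℝ) (hγ : 0 < γ)
    (hiso : ∀ R : Finset (Fin n), R.Nonempty → (R.card : ℝ) ≤ (n : ℝ) / d →
      γ * d * R.card ≤
        ((Finset.univ.filter (fun u => u ∉ R ∧ ∃ v ∈ R, G.Adj u v)).card : ℝ))
    (x y : Fin n → Bool) (hxy : x ≠ y)
    (hδ : ((Finset.univ.filter (fun i => x i ≠ y i)).card : ℝ) / n ≤ 1 / d) :
    γ * (((Finset.univ.filter (fun i => x i ≠ y i)).card : ℝ) / n) * d ≤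
      ((Finset.univ.filter (fun v : Fin n => ∃ u ∈ G.neighborFinset v, x u ≠ y u)).card : ℝ)
        / n := by
  set R := Finset.univ.filter (fun i => x i ≠ y i) with hRdef
  have hR : R.Nonempty := by
    by_contra h
    apply hxy
    funext i
    by_contra hi
    exact h ⟨i, by simp [hRdef, hi]⟩
  obtain ⟨i0, -⟩ := hR.exists_mem
  have hn : (0:ℝ) < n := by
    have := i0.pos
    exact_mod_cast this
  have h1 : (R.card : ℝ) ≤ (n : ℝ) / d := by
    have := mul_le_mul_of_nonneg_right hδ hn.le
    rwa [div_mul_cancel₀ _ hn.ne', one_div, inv_mul_eq_div] at this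
  have h2 := hiso R hR h1
  have hsub : (Finset.univ.filter (fun u => u ∉ R ∧ ∃ v ∈ R, G.Adj u v)) ⊆
      (Finset.univ.filter (fun v : Fin n => ∃ u ∈ G.neighborFinset v, x u ≠ y u)) := by
    intro u hu
    rw [mem_filter] at hu ⊢
    refine ⟨mem_univ u, ?_⟩
    obtain ⟨-, -, v, hv, hadj⟩ := hu
    rw [hRdef, mem_filter] at hv
    exact ⟨v, (G.mem_neighborFinset u v).mpr hadj, hv.2⟩
  have h3 : ((Finset.univ.filter (fun u => u ∉ R ∧ ∃ v ∈ R, G.Adj u v)).card : ℝ) ≤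
      ((Finset.univ.filter (fun v : Fin n => ∃ u ∈ G.neighborFinset v, x u ≠ y u)).card : ℝ) := by
    exact_mod_cast Finset.card_le_card hsub
  have h4 := h2.trans h3
  have heq : γ * ((R.card : ℝ) / n) * d = (γ * d * R.card) / n := by ring
  rw [heq]
  gcongr
end
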